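/- Fix n ≥ 1 and let Θ : Γ(E) → Γ(E_*) be a contractive multi-analytic operator, Δ_Θ := (I − Θ*Θ)^{1/2}, and let C = [C_1, …, C_n] be the row isometry on cl ran Δ_Θ determined by C_j(Δ_Θ f) = Δ_Θ(L_j^E f). Then ∑_{j=1}^{n} C_j C_j* = I on cl ran Δ_Θ (i.e. C is a Cuntz row isometry) if and only if cl(Δ_Θ(Γ(E))) = cl(Δ_Θ(Γ(E) ⊖ E)), where Γ(E) ⊖ E denotes the subspace of f ∈ Γ(E) whose component at the empty word vanishes. -/

import Mathlib

set_option linter.unusedSectionVars false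

noncomputable section
open ContinuousLinearMap
open scoped ENNReal NNReal ComplexInnerProductSpace
section Defect
variable {H K : Type*} [NormedAddCommGroup H] [InnerProductSpace ℂ H] [CompleteSpace H]
  [NormedAddCommGroup K] [InnerProductSpace ℂ K] [CompleteSpace K]

/-- The defect operator `Δ_A := (I - A*A)^{1/2}` of a contraction `A : H → K`. -/
noncomputable def defect (A : H →L[ℂ] K) : H →L[ℂ] H :=
  CFC.sqrt (1 - (ContinuousLinearMap.adjoint A).comp A)

/-- Closure of the range of an operator, as a submodule. -/
noncomputable def clRan (A : H →L[ℂ] K) : Submodule ℂ K :=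
  (LinearMap.range (A : H →ₗ[ℂ] K)).topologicalClosure

theorem defect_mem_clRan (A : H →L[ℂ] K) (x : H) : defect A x ∈ clRan (defect A) :=
  Submodule.le_topologicalClosure _ (LinearMap.mem_range_self (defect A : H →ₗ[ℂ] H) x)

instance clRan_completeSpace (A : H →L[ℂ] K) : CompleteSpace (clRan A) :=
  (Submodule.isClosed_topologicalClosure _).isComplete.completeSpace_coe
end Defect

section FockDef
/-- Words in the generators `{1, …, n}`: the free monoid on `Fin n`. -/
abbrev Word (n : ℕ) := List (Fin n)

/-- The full Fock space over `ℂⁿ` with coefficients in `E`, realized as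
`ℓ²(F_n^+, E)`, the Hilbert space of square-summable `E`-valued families indexed by words. -/
abbrev Fock (n : ℕ) (E : Type*) [NormedAddCommGroup E] [InnerProductSpace ℂ E] : Type _ :=
  lp (fun _ : Word n => E) 2

variable {n : ℕ} {E : Type*} [NormedAddCommGroup E] [InnerProductSpace ℂ E]

/-- The underlying function of `L_i f`: `(L_i f)(α) = f(β)` if `α = iβ`, else `0`. -/
def shiftFun (i : Fin n) (f : Word n → E) : Word n → E
  | [] => 0
  | a :: β => if a = i then f β else 0

theorem shiftFun_cons (i : Fin n) (f : Word n → E) (β : Word n) :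
    shiftFun i f (i :: β) = f β := by simp [shiftFun]

theorem shiftFun_eq_zero {i : Fin n} {f : Word n → E} {α : Word n}
    (hα : α ∉ Set.range (fun β : Word n => (i :: β : Word n))) : shiftFun i f α = 0 := by
  match α with
  | [] => rfl
  | a :: β =>
    have : ¬ (a = i) := by rintro rfl; exact hα ⟨β, rfl⟩
    simp [shiftFun, this]

theorem cons_injective (i : Fin n) :
    Function.Injective (fun β : Word n => (i :: β : Word n)) := fun a b h => by
  simpa using h

theorem shiftFun_memℓp (i : Fin n) (f : Fock n E) : Memℓp (shiftFun i ⇑f) 2 := by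
  refine memℓp_gen ?_
  have h0 : ∀ α ∉ Set.range (fun β : Word n => (i :: β : Word n)),
      ‖shiftFun i (⇑f) α‖ ^ (2 : ℝ≥0∞).toReal = 0 := by
    intro α hα
    rw [shiftFun_eq_zero hα]
    simp [Real.zero_rpow]
  refine ((cons_injective i).summable_iff h0).mp ?_
  have h1 : (fun α => ‖shiftFun i (⇑f) α‖ ^ (2 : ℝ≥0∞).toReal) ∘
      (fun β : Word n => (i :: β : Word n)) = fun β => ‖f β‖ ^ (2 : ℝ≥0∞).toReal := by
    funext β
    simp [Function.comp, shiftFun_cons]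
  rw [h1]
  exact (lp.memℓp f).summable (by norm_num)

theorem shiftFun_norm (i : Fin n) (f : Fock n E) :
    ‖(⟨shiftFun i ⇑f, shiftFun_memℓp i f⟩ : Fock n E)‖ = ‖f‖ := by
  have hp : 0 < (2 : ℝ≥0∞).toReal := by norm_num
  refine Real.rpow_left_injOn (by norm_num : (2 : ℝ≥0∞).toReal ≠ 0)
    (norm_nonneg _) (norm_nonneg _) ?_
  simp only []
  rw [lp.norm_rpow_eq_tsum hp, lp.norm_rpow_eq_tsum hp]
  have h0 : (Function.support fun α => ‖shiftFun i (⇑f) α‖ ^ (2 : ℝ≥0∞).toReal) ⊆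
      Set.range (fun β : Word n => (i :: β : Word n)) := by
    intro α hα
    simp only [Function.mem_support] at hα
    by_contra hr
    exact hα (by rw [shiftFun_eq_zero hr]; simp [Real.zero_rpow])
  rw [← (cons_injective i).tsum_eq h0]
  congr 1
  funext β
  simp [shiftFun_cons]

/-- The left creation operator `L_i` on the Fock space, as a linear map. -/
noncomputable def creationL (i : Fin n) : Fock n E →ₗ[ℂ] Fock n E where
  toFun f := ⟨shiftFun i ⇑f, shiftFun_memℓp i f⟩
  map_add' f g := by
    apply lp.ext
    funext α
    match α with
    | [] =>
      show _ = shiftFun i f [] + shiftFun i g []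
      simp [shiftFun, lp.coeFn_add]
    | a :: β =>
      show _ = shiftFun i f (a :: β) + shiftFun i g (a :: β)
      by_cases h : a = i <;> simp [shiftFun, h, lp.coeFn_add]
  map_smul' c f := by
    apply lp.ext
    funext α
    match α with
    | [] => simp [shiftFun, lp.coeFn_smul]
    | a :: β =>
      by_cases h : a = i <;> simp [shiftFun, h, lp.coeFn_smul]

/-- The left creation operator `L_i = L_i^E ∈ B(Γ(E))`, defined by
`(L_i f)(α) = f(β)` if `α = iβ` for some word `β`, and `(L_i f)(α) = 0` otherwise. -/
noncomputable def creation (i : Fin n) : Fock n E →L[ℂ] Fock n E :=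
  (creationL i).mkContinuous 1 (fun f => by
    rw [one_mul]
    exact le_of_eq (shiftFun_norm i f))


/-- The `E`-valued family supported at the empty word with value `v`. -/
def constFun (n : ℕ) (v : E) : Word n → E := fun α => if α = [] then v else 0

theorem constFun_memℓp (v : E) : Memℓp (constFun n v) 2 := by
  refine (memℓp_zero ?_).of_exponent_ge zero_le
  refine (Set.finite_singleton ([] : Word n)).subset ?_
  intro α hα
  simp only [Set.mem_setOf_eq, constFun] at hα
  by_contra h
  simp only [Set.mem_singleton_iff] at h
  exact hα (if_neg h)

/-- The canonical embedding of `E` into `Γ(E)` (families supported at the empty word). -/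
def fockConst (n : ℕ) (v : E) : Fock n E := ⟨constFun n v, constFun_memℓp v⟩

theorem fockConst_norm_le (f : Fock n E) :
    ‖(⟨constFun n (f []), constFun_memℓp _⟩ : Fock n E)‖ ≤ ‖f‖ := by
  have hp : 0 < (2 : ℝ≥0∞).toReal := by norm_num
  rw [← Real.rpow_le_rpow_iff (norm_nonneg _) (norm_nonneg _) hp]
  rw [lp.norm_rpow_eq_tsum hp]
  have h1 : (∑' α : Word n, ‖constFun n (f []) α‖ ^ (2 : ℝ≥0∞).toReal) =
      ‖f []‖ ^ (2 : ℝ≥0∞).toReal := by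
    refine tsum_eq_single ([] : Word n) ?_
    intro b' hb'
    simp [constFun, if_neg hb', Real.zero_rpow hp.ne']
  rw [h1]
  exact Real.rpow_le_rpow (norm_nonneg _) (lp.norm_apply_le_norm two_ne_zero f []) hp.le

/-- `P_∅`, the orthogonal projection of `Γ(E)` onto the subspace of families supported
at the empty word, as a linear map. -/
noncomputable def projEmptyL : Fock n E →ₗ[ℂ] Fock n E where
  toFun f := ⟨constFun n (f []), constFun_memℓp _⟩
  map_add' f g := by
    apply lp.ext; funext α
    show _ = constFun n (f []) α + constFun n (g []) α
    by_cases h : α = [] <;> simp [constFun, h, lp.coeFn_add]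
  map_smul' c f := by
    apply lp.ext; funext α
    by_cases h : α = [] <;> simp [constFun, h, lp.coeFn_smul]

/-- `P_∅ = P_∅^E`, the orthogonal projection of `Γ(E)` onto the subspace of families
supported at the empty word (identified with `E`). -/
noncomputable def projEmpty : Fock n E →L[ℂ] Fock n E :=
  projEmptyL.mkContinuous 1 (fun f => by rw [one_mul]; exact fockConst_norm_le f)

end FockDef

/-!
Since `C_j Δ_Θ = Δ_Θ L_j` and every `L_j` maps `Γ(E)` into `Γ(E) ⊖ E`, each `C_j` maps
`cl ran Δ_Θ` into `cl Δ_Θ(Γ(E) ⊖ E)`; so `∑ C_j C_j^* = I` forces that subspace to be everything.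
Conversely every `f ∈ Γ(E) ⊖ E` is `∑ L_j L_j^* f`, so `Δ_Θ f = ∑ C_j Δ_Θ L_j^* f` lies in the
span of the ranges of the `C_j`, where `∑ C_j C_j^*` is the identity because `C` is a row
isometry (the relation `⟨Δ_Θ x, Δ_Θ y⟩ = ⟨x, y⟩ - ⟨Θ x, Θ y⟩` transfers the row-isometry relations
of the `L_j` to the `C_j`); if these vectors are dense, `∑ C_j C_j^* = I` by continuity.
-/

open scoped InnerProductSpace

section Defect

variable {H K : Type*} [NormedAddCommGroup H] [InnerProductSpace ℂ H] [CompleteSpace H]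
  [NormedAddCommGroup K] [InnerProductSpace ℂ K] [CompleteSpace K]

theorem one_sub_adjoint_comp_self_nonneg {A : H →L[ℂ] K} (hA : ‖A‖ ≤ 1) :
    0 ≤ 1 - adjoint A ∘L A := by
  rw [sub_nonneg, ← CStarAlgebra.norm_le_one_iff_of_nonneg _
    ((nonneg_iff_isPositive _).mpr (isPositive_adjoint_comp_self A)), norm_adjoint_comp_self]
  exact mul_le_one₀ hA (norm_nonneg _) hA

theorem defect_comp_defect {A : H →L[ℂ] K} (hA : ‖A‖ ≤ 1) :
    defect A ∘L defect A = 1 - adjoint A ∘L A :=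
  CFC.sqrt_mul_sqrt_self _ (one_sub_adjoint_comp_self_nonneg hA)

theorem inner_defect_defect {A : H →L[ℂ] K} (hA : ‖A‖ ≤ 1) (x y : H) :
    ⟪defect A x, defect A y⟫_ℂ = ⟪x, y⟫_ℂ - ⟪A x, A y⟫_ℂ := by
  rw [← adjoint_inner_right, (CFC.sqrt_nonneg _).isSelfAdjoint.adjoint_eq, ← comp_apply,
    defect_comp_defect hA]
  simp [inner_sub_right, adjoint_inner_right]

end Defect

section ClosedRange

variable {H K : Type*} [NormedAddCommGroup H] [InnerProductSpace ℂ H]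
  [NormedAddCommGroup K] [InnerProductSpace ℂ K]

def toClRan (A : H →L[ℂ] K) : H →L[ℂ] clRan A :=
  A.codRestrict (clRan A) fun x =>
    Submodule.le_topologicalClosure _ (LinearMap.mem_range_self (A : H →ₗ[ℂ] K) x)

theorem dense_toClRan_image_iff (A : H →L[ℂ] K) (s : Set H) :
    Dense (toClRan A '' s) ↔ closure (Set.range A) = closure (A '' s) := by
  have hclRan : (clRan A : Set K) = closure (Set.range A) := by
    rw [clRan, Submodule.topologicalClosure_coe, LinearMap.coe_range, coe_coe]
  rw [Topology.IsInducing.subtypeVal.dense_iff, Set.image_image, subset_antisymm_iff,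
    and_iff_left (closure_mono (Set.image_subset_range A s)), ← hclRan]
  exact Subtype.forall

theorem denseRange_toClRan (A : H →L[ℂ] K) : DenseRange (toClRan A) := by
  simpa [DenseRange] using (dense_toClRan_image_iff A Set.univ).mpr (by rw [Set.image_univ])

end ClosedRange

section RowIsometry

variable {𝕜 ι M N : Type*} [RCLike 𝕜] [DecidableEq ι]
  [NormedAddCommGroup M] [InnerProductSpace 𝕜 M] [NormedAddCommGroup N] [InnerProductSpace 𝕜 N]

def IsRowIsometry (V : ι → M →L[𝕜] N) : Prop :=
  ∀ j k x y, ⟪V j x, V k y⟫_𝕜 = if j = k then ⟪x, y⟫_𝕜 else 0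

theorem IsRowIsometry.sum_comp_adjoint_apply [Fintype ι] [CompleteSpace M] [CompleteSpace N]
    {V : ι → M →L[𝕜] N} (hV : IsRowIsometry V) (k : ι) (y : M) :
    (∑ j, V j ∘L adjoint (V j)) (V k y) = V k y := by
  have hadj : ∀ j, adjoint (V j) (V k y) = if j = k then y else 0 := fun j =>
    ext_inner_left 𝕜 fun x => by
      rw [adjoint_inner_right, hV]
      split_ifs <;> simp
  simp [sum_apply, hadj, apply_ite]

variable {X : Type*} [AddCommGroup X] [Module 𝕜 X] {D : X →ₗ[𝕜] M} {L : ι → X → X}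
  {C : ι → M →L[𝕜] M}

theorem isRowIsometry_of_intertwining (hD : DenseRange D) (hC : ∀ j x, C j (D x) = D (L j x))
    (hDL : ∀ j k x y, ⟪D (L j x), D (L k y)⟫_𝕜 = if j = k then ⟪D x, D y⟫_𝕜 else 0) :
    IsRowIsometry C := fun j k u v =>
  hD.induction_on₂ (p := fun u v => ⟪C j u, C k v⟫_𝕜 = if j = k then ⟪u, v⟫_𝕜 else 0)
    (isClosed_eq (by fun_prop) (by split_ifs <;> fun_prop)) (fun x y => by rw [hC, hC, hDL]) u v

theorem dense_image_of_sum_comp_adjoint_eq_one [Fintype ι] [CompleteSpace M] (hD : DenseRange D)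
    (hC : ∀ j x, C j (D x) = D (L j x)) {S : Submodule 𝕜 X} (hLS : ∀ j x, L j x ∈ S)
    (hsum : ∑ j, C j ∘L adjoint (C j) = 1) : Dense (D '' S) := by
  set N := (S.map D).topologicalClosure
  have hCN : ∀ j u, C j u ∈ N := fun j u =>
    hD.induction_on (p := fun u => C j u ∈ N) u
      ((Submodule.isClosed_topologicalClosure _).preimage (C j).continuous)
      (fun x => by
        rw [hC]
        exact Submodule.le_topologicalClosure _ (Submodule.mem_map_of_mem (hLS j x)))
  intro u
  have hu : u = ∑ j, C j (adjoint (C j) u) := by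
    simpa using (DFunLike.congr_fun hsum u).symm
  rw [← Submodule.map_coe, ← Submodule.topologicalClosure_coe, hu]
  exact N.sum_mem fun j _ => hCN j _

theorem IsRowIsometry.sum_comp_adjoint_eq_one_of_dense [Fintype ι] [CompleteSpace M]
    (hrow : IsRowIsometry C) (hC : ∀ j x, C j (D x) = D (L j x)) {S : Set X}
    (hS : ∀ x ∈ S, ∃ g : ι → X, ∑ j, L j (g j) = x) (hdense : Dense (D '' S)) :
    ∑ j, C j ∘L adjoint (C j) = 1 := by
  refine DFunLike.coe_injective <| Continuous.ext_on hdense (by fun_prop) (by fun_prop) ?_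
  rintro _ ⟨x, hx, rfl⟩
  obtain ⟨g, rfl⟩ := hS x hx
  simp only [map_sum, ← hC, one_apply_eq_self, hrow.sum_comp_adjoint_apply]

end RowIsometry

section Fock

variable {n : ℕ} {E : Type*} [NormedAddCommGroup E] [InnerProductSpace ℂ E]

theorem creation_apply_nil (i : Fin n) (f : Fock n E) : creation i f [] = 0 := rfl

theorem isRowIsometry_creation :
    IsRowIsometry (creation : Fin n → Fock n E →L[ℂ] Fock n E) := by
  intro j k f g
  split_ifs with h
  · subst h
    exact (LinearMap.norm_map_iff_inner_map_map (𝕜 := ℂ) (creation j (E := E))).mp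
      (shiftFun_norm j) f g
  · rw [lp.inner_eq_tsum]
    refine (tsum_congr fun α => ?_).trans tsum_zero
    rcases α with _ | ⟨a, β⟩
    · exact inner_zero_left _
    · change ⟪shiftFun j f (a :: β), shiftFun k g (a :: β)⟫_ℂ = 0
      simp only [shiftFun]
      split_ifs <;> simp_all

/-- `Γ(E) ⊖ E`. -/
def vanishingAtNil (n : ℕ) (E : Type*) [NormedAddCommGroup E] [InnerProductSpace ℂ E] :
    Submodule ℂ (Fock n E) where
  carrier := {f | f [] = 0}
  zero_mem' := rfl
  add_mem' {f g} hf hg := by simp_all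
  smul_mem' c f hf := by simp_all

/-- The annihilation operator `L_i^*`. -/
def annihilation (i : Fin n) (f : Fock n E) : Fock n E :=
  ⟨fun β => f (i :: β), memℓp_gen <|
    ((lp.memℓp f).summable (by norm_num)).comp_injective (cons_injective i)⟩

theorem sum_creation_annihilation {f : Fock n E} (hf : f [] = 0) :
    ∑ j, creation j (annihilation j f) = f := by
  refine lp.ext (funext fun α => ?_)
  rw [lp.coeFn_sum, Finset.sum_apply]
  rcases α with _ | ⟨a, β⟩
  · simp [creation_apply_nil, hf]
  · change ∑ j, shiftFun j (annihilation j f) (a :: β) = f (a :: β)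
    simp [shiftFun, annihilation]

end Fock

theorem inner_defect_creation_creation {n : ℕ} {E Estar : Type*}
    [NormedAddCommGroup E] [InnerProductSpace ℂ E] [CompleteSpace E]
    [NormedAddCommGroup Estar] [InnerProductSpace ℂ Estar] [CompleteSpace Estar]
    {Θ : Fock n E →L[ℂ] Fock n Estar} (hΘc : ‖Θ‖ ≤ 1)
    (hΘ : ∀ i, Θ.comp (creation i) = (creation i).comp Θ) (j k : Fin n) (f g : Fock n E) :
    ⟪defect Θ (creation j f), defect Θ (creation k g)⟫_ℂ =
      if j = k then ⟪defect Θ f, defect Θ g⟫_ℂ else 0 := by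
  have hΘL : ∀ i f, Θ (creation i f) = creation i (Θ f) := fun i => DFunLike.congr_fun (hΘ i)
  rw [inner_defect_defect hΘc, inner_defect_defect hΘc, hΘL, hΘL, isRowIsometry_creation,
    isRowIsometry_creation]
  split_ifs <;> simp

theorem cuntz_iff_szego_general {n : ℕ} {E Estar : Type*}
    [NormedAddCommGroup E] [InnerProductSpace ℂ E] [CompleteSpace E]
    [NormedAddCommGroup Estar] [InnerProductSpace ℂ Estar] [CompleteSpace Estar]
    (Θ : Fock n E →L[ℂ] Fock n Estar) (hΘc : ‖Θ‖ ≤ 1)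
    (hΘ : ∀ i : Fin n, Θ.comp (creation i) = (creation i).comp Θ)
    (C : Fin n → (clRan (defect Θ) →L[ℂ] clRan (defect Θ)))
    (hC : ∀ (j : Fin n) (f : Fock n E), C j ⟨defect Θ f, defect_mem_clRan _ _⟩ =
      ⟨defect Θ (creation j f), defect_mem_clRan _ _⟩) :
    (∑ j : Fin n, (C j).comp (ContinuousLinearMap.adjoint (C j)) = 1) ↔
      closure (Set.range (defect Θ)) =
        closure (defect Θ '' {f : Fock n E | f [] = 0}) := by
  let D : Fock n E →ₗ[ℂ] clRan (defect Θ) := toClRan (defect Θ)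
  have hD : DenseRange D := denseRange_toClRan (defect Θ)
  have hCD : ∀ j f, C j (D f) = D (creation j f) := hC
  have hrow : IsRowIsometry C := isRowIsometry_of_intertwining hD hCD
    (inner_defect_creation_creation hΘc hΘ)
  rw [← dense_toClRan_image_iff]
  exact ⟨dense_image_of_sum_comp_adjoint_eq_one hD hCD (S := vanishingAtNil n E)
      creation_apply_nil,
    hrow.sum_comp_adjoint_eq_one_of_dense hCD
      (fun f hf => ⟨fun j => annihilation j f, sum_creation_annihilation hf⟩)⟩

/-- For contractive multi-analytic `Θ : Γ(E) → Γ(E_*)` and the row isometry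
`C = [C_1, …, C_n]` on `cl ran Δ_Θ` determined by `C_j(Δ_Θ f) = Δ_Θ(L_j f)`:
`∑ⱼ C_j C_j* = I` iff `cl(Δ_Θ(Γ(E))) = cl(Δ_Θ(Γ(E) ⊖ E))`. -/
theorem cuntz_iff_szego {n : ℕ} (hn : 1 ≤ n) {E Estar : Type*}
    [NormedAddCommGroup E] [InnerProductSpace ℂ E] [CompleteSpace E]
    [NormedAddCommGroup Estar] [InnerProductSpace ℂ Estar] [CompleteSpace Estar]
    (Θ : Fock n E →L[ℂ] Fock n Estar) (hΘc : ‖Θ‖ ≤ 1)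
    (hΘ : ∀ i : Fin n, Θ.comp (creation i) = (creation i).comp Θ)
    (C : Fin n → (clRan (defect Θ) →L[ℂ] clRan (defect Θ)))
    (hC : ∀ (j : Fin n) (f : Fock n E), C j ⟨defect Θ f, defect_mem_clRan _ _⟩ =
      ⟨defect Θ (creation j f), defect_mem_clRan _ _⟩) :
    (∑ j : Fin n, (C j).comp (ContinuousLinearMap.adjoint (C j)) = 1) ↔
      closure (Set.range (defect Θ)) =
        closure (defect Θ '' {f : Fock n E | f [] = 0}) :=
  cuntz_iff_szego_general Θ hΘc hΘ C hC
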